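/- Let X, Y, Z, A, B, C be jointly distributed finite discrete random variables whose distribution factorizes according to the triangle causal structure: P(x,y,z,a,b,c) = P(x|b,c)·P(y|a,c)·P(z|a,b)·P(a)·P(b)·P(c). Then I(X:Y) + I(X:Z) ≤ H(X). -/

import Mathlib

open Finset

/-- Probability that the random variable `X` takes value `x`, for weights `μ`. -/
noncomputable def prob {Ω α : Type} [Fintype Ω] [Fintype α] [DecidableEq α]
    (μ : Ω → ℝ) (X : Ω → α) (x : α) : ℝ :=
  ∑ ω, if X ω = x then μ ω else 0

/-- Shannon entropy (base 2) of a finite discrete random variable,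
with the convention `0 * log₂ 0 = 0` (since `Real.logb 2 0 = 0`). -/
noncomputable def ent {Ω α : Type} [Fintype Ω] [Fintype α] [DecidableEq α]
    (μ : Ω → ℝ) (X : Ω → α) : ℝ :=
  -∑ x, prob μ X x * Real.logb 2 (prob μ X x)

/-- `μ` is a probability mass function on the finite sample space `Ω`. -/
def IsPMF {Ω : Type} [Fintype Ω] (μ : Ω → ℝ) : Prop :=
  (∀ ω, 0 ≤ μ ω) ∧ ∑ ω, μ ω = 1

/-- Mutual information `I(X:Y) = H(X) + H(Y) - H(X,Y)`. -/
noncomputable def mutualInfo {Ω α β : Type} [Fintype Ω] [Fintype α] [Fintype β]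
    [DecidableEq α] [DecidableEq β] (μ : Ω → ℝ) (X : Ω → α) (Y : Ω → β) : ℝ :=
  ent μ X + ent μ Y - ent μ (fun ω => (X ω, Y ω))

/-- Conditional mutual information
`I(X:Y|Z) = H(X,Z) + H(Y,Z) - H(Z) - H(X,Y,Z)`. -/
noncomputable def condMutualInfo {Ω α β γ : Type} [Fintype Ω] [Fintype α] [Fintype β]
    [Fintype γ] [DecidableEq α] [DecidableEq β] [DecidableEq γ]
    (μ : Ω → ℝ) (X : Ω → α) (Y : Ω → β) (Z : Ω → γ) : ℝ :=
  ent μ (fun ω => (X ω, Z ω)) + ent μ (fun ω => (Y ω, Z ω)) - ent μ Z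
    - ent μ (fun ω => (X ω, Y ω, Z ω))

/-- Conditional entropy `H(X|Y) = H(X,Y) - H(Y)`. -/
noncomputable def condEnt {Ω α β : Type} [Fintype Ω] [Fintype α] [Fintype β]
    [DecidableEq α] [DecidableEq β] (μ : Ω → ℝ) (X : Ω → α) (Y : Ω → β) : ℝ :=
  ent μ (fun ω => (X ω, Y ω)) - ent μ Y

/-!
Conditionally on their common cause `C`, the observations `X` and `Y` are independent, and so
are `X` and `Z` given `B`; hence `I(X:Y) ≤ I(X:C)` and `I(X:Z) ≤ I(X:B)`. As `B` and `C` are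
independent, `I(X:C) ≤ I(X:C|B)`, and by the chain rule `I(X:B) + I(X:C|B) = I(X:BC) ≤ H(X)`.

Entropies are handled as expectations over the sample space,
`H(W) = -∑ ω, μ ω * log₂ P(W = W ω)`, which makes the nonnegativity of conditional mutual
information an instance of Gibbs' inequality.
-/

section

variable {Ω α β γ : Type} [Fintype Ω] [Fintype α] [Fintype β] [Fintype γ]
  [DecidableEq α] [DecidableEq β] [DecidableEq γ] {μ : Ω → ℝ}

lemma prob_nonneg (hμ : ∀ ω, 0 ≤ μ ω) (W : Ω → α) (a : α) : 0 ≤ prob μ W a :=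
  Finset.sum_nonneg fun ω _ => by split_ifs <;> simp [hμ ω]

lemma sum_prob_mul (W : Ω → α) (g : α → ℝ) :
    ∑ a, prob μ W a * g a = ∑ ω, μ ω * g (W ω) := by
  simp only [prob, Finset.sum_mul, ite_mul, zero_mul]
  rw [Finset.sum_comm]
  simp

lemma sum_prob (hμ : IsPMF μ) (W : Ω → α) : ∑ a, prob μ W a = 1 := by
  simpa [hμ.2] using sum_prob_mul (μ := μ) W 1

lemma prob_comp (W : Ω → α) (f : α → β) (b : β) :
    prob μ (fun ω => f (W ω)) b = ∑ a, if f a = b then prob μ W a else 0 := by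
  have h := sum_prob_mul (μ := μ) W fun a => if f a = b then 1 else 0
  simp only [mul_ite, mul_one, mul_zero] at h
  exact h.symm

lemma prob_le_prob_comp (hμ : ∀ ω, 0 ≤ μ ω) (W : Ω → α) (f : α → β) (a : α) :
    prob μ W a ≤ prob μ (fun ω => f (W ω)) (f a) :=
  calc prob μ W a = if f a = f a then prob μ W a else 0 := by simp
    _ ≤ prob μ (fun ω => f (W ω)) (f a) := by
      rw [prob_comp W f]
      exact Finset.single_le_sum (f := fun a' => if f a' = f a then prob μ W a' else 0)
        (fun a' _ => by split_ifs <;> simp [prob_nonneg hμ W a']) (Finset.mem_univ a)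

lemma le_prob_apply (hμ : ∀ ω, 0 ≤ μ ω) (W : Ω → α) (ω : Ω) : μ ω ≤ prob μ W (W ω) :=
  calc μ ω = if W ω = W ω then μ ω else 0 := by simp
    _ ≤ prob μ W (W ω) :=
      Finset.single_le_sum (f := fun ω' => if W ω' = W ω then μ ω' else 0)
        (fun ω' _ => by split_ifs <;> simp [hμ ω']) (Finset.mem_univ ω)

lemma prob_apply_pos (hμ : ∀ ω, 0 ≤ μ ω) (W : Ω → α) {ω : Ω} (h : 0 < μ ω) :
    0 < prob μ W (W ω) :=
  h.trans_le (le_prob_apply hμ W ω)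

lemma prob_comp_of_injective (W : Ω → α) {f : α → β} (hf : Function.Injective f) (a : α) :
    prob μ (fun ω => f (W ω)) (f a) = prob μ W a := by
  simp [prob, hf.eq_iff]

lemma sum_prob_pair_left (X : Ω → α) (Y : Ω → β) (b : β) :
    ∑ a, prob μ (fun ω => (X ω, Y ω)) (a, b) = prob μ Y b := by
  rw [prob_comp (fun ω => (X ω, Y ω)) Prod.snd, Fintype.sum_prod_type]
  simp

lemma ent_eq_sum (W : Ω → α) : ent μ W = -∑ ω, μ ω * Real.logb 2 (prob μ W (W ω)) := by
  rw [ent, sum_prob_mul W fun a => Real.logb 2 (prob μ W a)]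

lemma ent_comp_of_injective (W : Ω → α) {f : α → β} (hf : Function.Injective f) :
    ent μ (fun ω => f (W ω)) = ent μ W := by
  simp only [ent_eq_sum, prob_comp_of_injective W hf]

lemma ent_pair_comm (X : Ω → α) (Y : Ω → β) :
    ent μ (fun ω => (Y ω, X ω)) = ent μ (fun ω => (X ω, Y ω)) :=
  ent_comp_of_injective (f := Prod.swap) (fun ω => (X ω, Y ω)) Prod.swap_injective

lemma ent_comp_le (hμ : ∀ ω, 0 ≤ μ ω) (W : Ω → α) (f : α → β) :
    ent μ (fun ω => f (W ω)) ≤ ent μ W := by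
  rw [ent_eq_sum, ent_eq_sum, neg_le_neg_iff]
  refine Finset.sum_le_sum fun ω _ => ?_
  rcases (hμ ω).eq_or_lt with h | h
  · simp [← h]
  · exact mul_le_mul_of_nonneg_left (Real.logb_le_logb_of_le one_lt_two
      (prob_apply_pos hμ W h) (prob_le_prob_comp hμ W f (W ω))) h.le

lemma sum_mul_logb_le_sum_mul_logb_prob (hμ : IsPMF μ) (W : Ω → α) {q : α → ℝ}
    (hq0 : ∀ a, 0 ≤ q a) (hq1 : ∑ a, q a ≤ 1) (hq : ∀ ω, 0 < μ ω → 0 < q (W ω)) :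
    ∑ ω, μ ω * Real.logb 2 (q (W ω)) ≤ ∑ ω, μ ω * Real.logb 2 (prob μ W (W ω)) := by
  have hlog2 : 0 < Real.log 2 := Real.log_pos one_lt_two
  have hterm : ∀ ω, μ ω * (Real.logb 2 (q (W ω)) - Real.logb 2 (prob μ W (W ω)))
      ≤ μ ω * (q (W ω) / prob μ W (W ω) - 1) / Real.log 2 := by
    intro ω
    rcases (hμ.1 ω).eq_or_lt with h | h
    · simp [← h]
    have hp := prob_apply_pos hμ.1 W h
    rw [← Real.logb_div (hq ω h).ne' hp.ne', mul_div_assoc]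
    refine mul_le_mul_of_nonneg_left ?_ h.le
    rw [Real.logb, div_le_div_iff_of_pos_right hlog2]
    exact Real.log_le_sub_one_of_pos (div_pos (hq ω h) hp)
  have hsum : ∑ ω, μ ω * (q (W ω) / prob μ W (W ω) - 1) ≤ 0 := by
    have hpq : ∀ a, prob μ W a * (q a / prob μ W a) ≤ q a := fun a => by
      rcases (prob_nonneg hμ.1 W a).eq_or_lt with h | h
      · simp [← h, hq0 a]
      · rw [mul_div_cancel₀ _ h.ne']
    simp only [mul_sub, mul_one, Finset.sum_sub_distrib, hμ.2,
      ← sum_prob_mul W fun a => q a / prob μ W a]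
    linarith [Finset.sum_le_sum fun a (_ : a ∈ Finset.univ) => hpq a]
  rw [← sub_nonpos]
  calc _ = ∑ ω, μ ω * (Real.logb 2 (q (W ω)) - Real.logb 2 (prob μ W (W ω))) := by
        simp only [mul_sub, Finset.sum_sub_distrib]
    _ ≤ ∑ ω, μ ω * (q (W ω) / prob μ W (W ω) - 1) / Real.log 2 :=
        Finset.sum_le_sum fun ω _ => hterm ω
    _ = (∑ ω, μ ω * (q (W ω) / prob μ W (W ω) - 1)) / Real.log 2 := (Finset.sum_div ..).symm
    _ ≤ 0 := div_nonpos_of_nonpos_of_nonneg hsum hlog2.le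

lemma sum_prob_triple_mid (X : Ω → α) (Y : Ω → β) (Z : Ω → γ) (v : α) (u : γ) :
    ∑ w, prob μ (fun ω => (X ω, Y ω, Z ω)) (v, w, u) = prob μ (fun ω => (X ω, Z ω)) (v, u) := by
  rw [prob_comp (fun ω => (X ω, Y ω, Z ω)) fun s => (s.1, s.2.2)]
  simp [Fintype.sum_prod_type, ite_and]

lemma condMutualInfo_nonneg (hμ : IsPMF μ) (X : Ω → α) (Y : Ω → β) (Z : Ω → γ) :
    0 ≤ condMutualInfo μ X Y Z := by
  -- the law of `(X, Y, Z)` making `X` and `Y` conditionally independent given `Z`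
  set q : α × β × γ → ℝ := fun s =>
    prob μ (fun ω => (X ω, Z ω)) (s.1, s.2.2) * prob μ (fun ω => (Y ω, Z ω)) (s.2.1, s.2.2)
      / prob μ Z s.2.2
  have hq1 : ∑ s, q s = 1 := by
    simp only [q, Fintype.sum_prod_type]
    simp_rw [Finset.sum_comm (t := (Finset.univ : Finset γ))]
    simp only [← Finset.sum_div, ← Finset.mul_sum, ← Finset.sum_mul, sum_prob_pair_left,
      mul_self_div_self, sum_prob hμ]
  have hXZ := fun {ω} => prob_apply_pos (ω := ω) hμ.1 (fun ω => (X ω, Z ω))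
  have hYZ := fun {ω} => prob_apply_pos (ω := ω) hμ.1 (fun ω => (Y ω, Z ω))
  have hZ := fun {ω} => prob_apply_pos (ω := ω) hμ.1 Z
  have hgibbs := sum_mul_logb_le_sum_mul_logb_prob hμ (fun ω => (X ω, Y ω, Z ω)) (q := q)
    (fun s => div_nonneg (mul_nonneg (prob_nonneg hμ.1 _ _) (prob_nonneg hμ.1 _ _))
      (prob_nonneg hμ.1 _ _)) hq1.le
    (fun ω h => div_pos (mul_pos (hXZ h) (hYZ h)) (hZ h))
  have hlogq : ∀ ω, μ ω * Real.logb 2 (q (X ω, Y ω, Z ω))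
      = μ ω * Real.logb 2 (prob μ (fun ω => (X ω, Z ω)) (X ω, Z ω))
        + μ ω * Real.logb 2 (prob μ (fun ω => (Y ω, Z ω)) (Y ω, Z ω))
        - μ ω * Real.logb 2 (prob μ Z (Z ω)) := by
    intro ω
    rcases (hμ.1 ω).eq_or_lt with h | h
    · simp [← h]
    rw [Real.logb_div (mul_pos (hXZ h) (hYZ h)).ne' (hZ h).ne',
      Real.logb_mul (hXZ h).ne' (hYZ h).ne']
    ring
  simp only [hlogq, Finset.sum_add_distrib, Finset.sum_sub_distrib] at hgibbs
  simp only [condMutualInfo, ent_eq_sum]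
  linarith

lemma condMutualInfo_eq_zero_of_condIndep (hμ : ∀ ω, 0 ≤ μ ω) {X : Ω → α} {Y : Ω → β}
    {Z : Ω → γ} (h : ∀ v w u, prob μ (fun ω => (X ω, Y ω, Z ω)) (v, w, u) * prob μ Z u
      = prob μ (fun ω => (X ω, Z ω)) (v, u) * prob μ (fun ω => (Y ω, Z ω)) (w, u)) :
    condMutualInfo μ X Y Z = 0 := by
  have hlog : ∀ ω, μ ω * Real.logb 2 (prob μ (fun ω => (X ω, Y ω, Z ω)) (X ω, Y ω, Z ω))
      + μ ω * Real.logb 2 (prob μ Z (Z ω))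
      = μ ω * Real.logb 2 (prob μ (fun ω => (X ω, Z ω)) (X ω, Z ω))
        + μ ω * Real.logb 2 (prob μ (fun ω => (Y ω, Z ω)) (Y ω, Z ω)) := by
    intro ω
    rcases (hμ ω).eq_or_lt with hω | hω
    · simp [← hω]
    rw [← mul_add, ← mul_add, ← Real.logb_mul (prob_apply_pos hμ _ hω).ne'
      (prob_apply_pos hμ _ hω).ne', ← Real.logb_mul (prob_apply_pos hμ _ hω).ne'
      (prob_apply_pos hμ _ hω).ne', h]
  have := Finset.sum_congr rfl fun ω (_ : ω ∈ Finset.univ) => hlog ω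
  simp only [Finset.sum_add_distrib] at this
  simp only [condMutualInfo, ent_eq_sum]
  linarith

lemma condIndep_of_prob_eq_mul {X : Ω → α} {Y : Ω → β} {Z : Ω → γ} {f : α → γ → ℝ}
    {g : β → γ → ℝ} (h : ∀ v w u, prob μ (fun ω => (X ω, Y ω, Z ω)) (v, w, u) = f v u * g w u)
    (v : α) (w : β) (u : γ) :
    prob μ (fun ω => (X ω, Y ω, Z ω)) (v, w, u) * prob μ Z u
      = prob μ (fun ω => (X ω, Z ω)) (v, u) * prob μ (fun ω => (Y ω, Z ω)) (w, u) := by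
  simp only [← sum_prob_triple_mid X Y Z, ← sum_prob_pair_left Y Z,
    ← sum_prob_pair_left X (fun ω => (Y ω, Z ω)), h, ← Finset.mul_sum, ← Finset.sum_mul]
  ring

lemma mutualInfo_eq_zero_of_indep (hμ : ∀ ω, 0 ≤ μ ω) {X : Ω → α} {Y : Ω → β}
    (h : ∀ v w, prob μ (fun ω => (X ω, Y ω)) (v, w) = prob μ X v * prob μ Y w) :
    mutualInfo μ X Y = 0 := by
  have hlog : ∀ ω, μ ω * Real.logb 2 (prob μ (fun ω => (X ω, Y ω)) (X ω, Y ω))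
      = μ ω * Real.logb 2 (prob μ X (X ω)) + μ ω * Real.logb 2 (prob μ Y (Y ω)) := by
    intro ω
    rcases (hμ ω).eq_or_lt with hω | hω
    · simp [← hω]
    rw [← mul_add, h, Real.logb_mul (prob_apply_pos hμ X hω).ne' (prob_apply_pos hμ Y hω).ne']
  have := Finset.sum_congr rfl fun ω (_ : ω ∈ Finset.univ) => hlog ω
  simp only [Finset.sum_add_distrib] at this
  simp only [mutualInfo, ent_eq_sum]
  linarith

lemma mutualInfo_le_ent (hμ : ∀ ω, 0 ≤ μ ω) (X : Ω → α) (Y : Ω → β) :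
    mutualInfo μ X Y ≤ ent μ X := by
  have : ent μ Y ≤ ent μ (fun ω => (X ω, Y ω)) :=
    ent_comp_le hμ (fun ω => (X ω, Y ω)) Prod.snd
  rw [mutualInfo]
  linarith

lemma mutualInfo_pair_eq_add (X : Ω → α) (Y : Ω → β) (Z : Ω → γ) :
    mutualInfo μ X (fun ω => (Y ω, Z ω)) = mutualInfo μ X Z + condMutualInfo μ X Y Z := by
  rw [mutualInfo, mutualInfo, condMutualInfo]
  ring

lemma mutualInfo_le_of_condMutualInfo_eq_zero (hμ : IsPMF μ) {X : Ω → α} {Y : Ω → β}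
    {Z : Ω → γ} (h : condMutualInfo μ X Y Z = 0) : mutualInfo μ X Y ≤ mutualInfo μ X Z := by
  have hYZ := ent_pair_comm (μ := μ) Y Z
  have hXYZ : ent μ (fun ω => (X ω, Z ω, Y ω)) = ent μ (fun ω => (X ω, Y ω, Z ω)) :=
    ent_comp_of_injective (f := fun s : α × β × γ => (s.1, s.2.2, s.2.1))
      (fun ω => (X ω, Y ω, Z ω)) (by
        rintro ⟨_, _, _⟩ ⟨_, _, _⟩ hst; simp only [Prod.mk.injEq] at hst ⊢; tauto)
  have := condMutualInfo_nonneg hμ X Z Y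
  simp only [mutualInfo, condMutualInfo] at *
  linarith

lemma mutualInfo_le_condMutualInfo_of_mutualInfo_eq_zero (hμ : IsPMF μ) {X : Ω → α}
    {Y : Ω → β} {Z : Ω → γ} (h : mutualInfo μ Y Z = 0) :
    mutualInfo μ X Y ≤ condMutualInfo μ X Y Z := by
  have hXY := ent_pair_comm (μ := μ) X Y
  have hXZ := ent_pair_comm (μ := μ) X Z
  have hXYZ : ent μ (fun ω => (Y ω, Z ω, X ω)) = ent μ (fun ω => (X ω, Y ω, Z ω)) :=
    ent_comp_of_injective (f := fun s : α × β × γ => (s.2.1, s.2.2, s.1))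
      (fun ω => (X ω, Y ω, Z ω)) (by
        rintro ⟨_, _, _⟩ ⟨_, _, _⟩ hst; simp only [Prod.mk.injEq] at hst ⊢; tauto)
  have := condMutualInfo_nonneg hμ Y Z X
  simp only [mutualInfo, condMutualInfo] at *
  linarith

end

def IsTriangleFactorization {Ω x y z a b c : Type} [Fintype Ω] [Fintype x] [Fintype y]
    [Fintype z] [Fintype a] [Fintype b] [Fintype c] [DecidableEq x] [DecidableEq y]
    [DecidableEq z] [DecidableEq a] [DecidableEq b] [DecidableEq c]
    (μ : Ω → ℝ) (X : Ω → x) (Y : Ω → y) (Z : Ω → z) (A : Ω → a) (B : Ω → b) (C : Ω → c)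
    (qX : b → c → x → ℝ) (qY : a → c → y → ℝ) (qZ : a → b → z → ℝ) : Prop :=
  ∀ xv yv zv av bv cv,
    prob μ (fun ω => (X ω, Y ω, Z ω, A ω, B ω, C ω)) (xv, yv, zv, av, bv, cv)
      = qX bv cv xv * qY av cv yv * qZ av bv zv * prob μ A av * prob μ B bv * prob μ C cv

namespace IsTriangleFactorization

variable {Ω x y z a b c : Type} [Fintype Ω] [Fintype x] [Fintype y] [Fintype z]
  [Fintype a] [Fintype b] [Fintype c] [DecidableEq x] [DecidableEq y] [DecidableEq z]
  [DecidableEq a] [DecidableEq b] [DecidableEq c]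
  {μ : Ω → ℝ} {X : Ω → x} {Y : Ω → y} {Z : Ω → z} {A : Ω → a} {B : Ω → b} {C : Ω → c}
  {qX : b → c → x → ℝ} {qY : a → c → y → ℝ} {qZ : a → b → z → ℝ}

lemma swap (h : IsTriangleFactorization μ X Y Z A B C qX qY qZ) :
    IsTriangleFactorization μ X Z Y A C B (fun cv bv => qX bv cv) qZ qY := by
  intro xv zv yv av cv bv
  have hperm : Function.Injective fun s : x × y × z × a × b × c =>
      (s.1, s.2.2.1, s.2.1, s.2.2.2.1, s.2.2.2.2.2, s.2.2.2.2.1) := by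
    rintro ⟨_, _, _, _, _, _⟩ ⟨_, _, _, _, _, _⟩ hst
    simp only [Prod.mk.injEq] at hst ⊢
    tauto
  rw [show prob μ (fun ω => (X ω, Z ω, Y ω, A ω, C ω, B ω)) (xv, zv, yv, av, cv, bv)
      = prob μ (fun ω => (X ω, Y ω, Z ω, A ω, B ω, C ω)) (xv, yv, zv, av, bv, cv) from
    prob_comp_of_injective (fun ω => (X ω, Y ω, Z ω, A ω, B ω, C ω)) hperm
      (xv, yv, zv, av, bv, cv), h]
  ring

lemma prob_XYC (h : IsTriangleFactorization μ X Y Z A B C qX qY qZ)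
    (hqZ : ∀ av bv, ∑ zv, qZ av bv zv = 1) (xv : x) (yv : y) (cv : c) :
    prob μ (fun ω => (X ω, Y ω, C ω)) (xv, yv, cv)
      = (∑ bv, qX bv cv xv * prob μ B bv)
        * ((∑ av, qY av cv yv * prob μ A av) * prob μ C cv) := by
  rw [prob_comp (fun ω => (X ω, Y ω, Z ω, A ω, B ω, C ω)) fun s => (s.1, s.2.1, s.2.2.2.2.2)]
  simp only [Fintype.sum_prod_type, Prod.mk.injEq, ite_and, Finset.sum_ite_irrel,
    Finset.sum_const_zero, Finset.sum_ite_eq', Finset.mem_univ, if_true, h _ _ _ _ _ _]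
  simp_rw [Finset.sum_comm (s := (Finset.univ : Finset z))]
  simp only [← Finset.sum_mul, ← Finset.mul_sum, hqZ, mul_one]
  rw [← mul_assoc, Finset.sum_mul_sum, Finset.sum_comm]
  congr 1
  exact Finset.sum_congr rfl fun _ _ => Finset.sum_congr rfl fun _ _ => by ring

lemma prob_CB (hμ : IsPMF μ) (h : IsTriangleFactorization μ X Y Z A B C qX qY qZ)
    (hqX : ∀ bv cv, ∑ xv, qX bv cv xv = 1) (hqY : ∀ av cv, ∑ yv, qY av cv yv = 1)
    (hqZ : ∀ av bv, ∑ zv, qZ av bv zv = 1) (cv : c) (bv : b) :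
    prob μ (fun ω => (C ω, B ω)) (cv, bv) = prob μ C cv * prob μ B bv := by
  rw [prob_comp (fun ω => (X ω, Y ω, Z ω, A ω, B ω, C ω)) fun s => (s.2.2.2.2.2, s.2.2.2.2.1)]
  simp only [Fintype.sum_prod_type, Prod.mk.injEq, ite_and, Finset.sum_ite_eq',
    Finset.mem_univ, if_true, h _ _ _ _ _ _]
  simp_rw [Finset.sum_comm (t := (Finset.univ : Finset a))]
  simp only [← Finset.sum_mul, ← Finset.mul_sum, hqX, hqY, hqZ, mul_one, one_mul, sum_prob hμ]
  ring

end IsTriangleFactorization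

theorem triangle_entropic_inequality_general
    {Ω x y z a b c : Type} [Fintype Ω] [Fintype x] [Fintype y] [Fintype z]
    [Fintype a] [Fintype b] [Fintype c]
    [DecidableEq x] [DecidableEq y] [DecidableEq z]
    [DecidableEq a] [DecidableEq b] [DecidableEq c]
    (μ : Ω → ℝ) (hμ : IsPMF μ)
    (X : Ω → x) (Y : Ω → y) (Z : Ω → z) (A : Ω → a) (B : Ω → b) (C : Ω → c)
    (qX : b → c → x → ℝ) (qY : a → c → y → ℝ) (qZ : a → b → z → ℝ)
    (hqX1 : ∀ bv cv, ∑ xv, qX bv cv xv = 1)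
    (hqY1 : ∀ av cv, ∑ yv, qY av cv yv = 1)
    (hqZ1 : ∀ av bv, ∑ zv, qZ av bv zv = 1)
    (hfact : ∀ (xv : x) (yv : y) (zv : z) (av : a) (bv : b) (cv : c),
      prob μ (fun ω => (X ω, Y ω, Z ω, A ω, B ω, C ω)) (xv, yv, zv, av, bv, cv)
        = qX bv cv xv * qY av cv yv * qZ av bv zv
            * prob μ A av * prob μ B bv * prob μ C cv) :
    mutualInfo μ X Y + mutualInfo μ X Z ≤ ent μ X := by
  have h : IsTriangleFactorization μ X Y Z A B C qX qY qZ := hfact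
  have hXYC : condMutualInfo μ X Y C = 0 :=
    condMutualInfo_eq_zero_of_condIndep hμ.1 (condIndep_of_prob_eq_mul (h.prob_XYC hqZ1))
  have hXZB : condMutualInfo μ X Z B = 0 :=
    condMutualInfo_eq_zero_of_condIndep hμ.1 (condIndep_of_prob_eq_mul (h.swap.prob_XYC hqY1))
  have hCB : mutualInfo μ C B = 0 :=
    mutualInfo_eq_zero_of_indep hμ.1 (h.prob_CB hμ hqX1 hqY1 hqZ1)
  calc mutualInfo μ X Y + mutualInfo μ X Z ≤ mutualInfo μ X C + mutualInfo μ X B :=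
        add_le_add (mutualInfo_le_of_condMutualInfo_eq_zero hμ hXYC)
          (mutualInfo_le_of_condMutualInfo_eq_zero hμ hXZB)
    _ ≤ condMutualInfo μ X C B + mutualInfo μ X B := by
        gcongr
        exact mutualInfo_le_condMutualInfo_of_mutualInfo_eq_zero hμ hCB
    _ = mutualInfo μ X (fun ω => (C ω, B ω)) := by rw [mutualInfo_pair_eq_add]; ring
    _ ≤ ent μ X := mutualInfo_le_ent hμ.1 X _

/-- For the triangle causal structure,
P(x,y,z,a,b,c) = P(x|b,c)·P(y|a,c)·P(z|a,b)·P(a)·P(b)·P(c),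
the observed variables satisfy I(X:Y) + I(X:Z) ≤ H(X). -/
theorem triangle_entropic_inequality
    {Ω x y z a b c : Type} [Fintype Ω] [Fintype x] [Fintype y] [Fintype z]
    [Fintype a] [Fintype b] [Fintype c]
    [DecidableEq x] [DecidableEq y] [DecidableEq z]
    [DecidableEq a] [DecidableEq b] [DecidableEq c]
    (μ : Ω → ℝ) (hμ : IsPMF μ)
    (X : Ω → x) (Y : Ω → y) (Z : Ω → z) (A : Ω → a) (B : Ω → b) (C : Ω → c)
    (qX : b → c → x → ℝ) (qY : a → c → y → ℝ) (qZ : a → b → z → ℝ)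
    (hqX0 : ∀ bv cv xv, 0 ≤ qX bv cv xv) (hqX1 : ∀ bv cv, ∑ xv, qX bv cv xv = 1)
    (hqY0 : ∀ av cv yv, 0 ≤ qY av cv yv) (hqY1 : ∀ av cv, ∑ yv, qY av cv yv = 1)
    (hqZ0 : ∀ av bv zv, 0 ≤ qZ av bv zv) (hqZ1 : ∀ av bv, ∑ zv, qZ av bv zv = 1)
    (hfact : ∀ (xv : x) (yv : y) (zv : z) (av : a) (bv : b) (cv : c),
      prob μ (fun ω => (X ω, Y ω, Z ω, A ω, B ω, C ω)) (xv, yv, zv, av, bv, cv)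
        = qX bv cv xv * qY av cv yv * qZ av bv zv
            * prob μ A av * prob μ B bv * prob μ C cv) :
    mutualInfo μ X Y + mutualInfo μ X Z ≤ ent μ X :=
  triangle_entropic_inequality_general μ hμ X Y Z A B C qX qY qZ hqX1 hqY1 hqZ1 hfact
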